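/- Let F be the Feynman–Kac operator associated with the path measures (μ_x), the rate function c and the initial function g, and suppose T₀ ∈ (0,T] satisfies ‖g‖ · Lip(c) · T₀ · e^{c₀T₀} < 1. Then there exists a unique bounded measurable function u : [0,T₀]×E → ℝ satisfying the integral equation u(t,x) = F[u](t,x) for all (t,x) ∈ [0,T₀]×E; moreover this solution satisfies |u(t,x)| ≤ ‖g‖ e^{c₀T₀} for all (t,x). -/

import Mathlib

open MeasureTheory Set Filter

/-- The Feynman–Kac operator `F[v](t,x) = ∫ exp(∫₀ᵗ c(v(t−s, ω(s))) ds) · g(ω(t)) dμ_x(ω)`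
on the space of continuous paths `ω : [0,T] → E`. -/
noncomputable def FeynmanKac {E : Type*} [TopologicalSpace E] [MeasurableSpace E]
    {T : ℝ} (hT : 0 ≤ T) [MeasurableSpace C(Set.Icc (0:ℝ) T, E)]
    (μ : E → Measure C(Set.Icc (0:ℝ) T, E))
    (c : ℝ → ℝ) (g : E → ℝ) (v : ℝ → E → ℝ) (t : ℝ) (x : E) : ℝ :=
  ∫ ω, Real.exp (∫ s in (0:ℝ)..t, c (v (t - s) (ω (Set.projIcc 0 T hT s))))
      * g (ω (Set.projIcc 0 T hT t)) ∂(μ x)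

/-!
On bounded measurable functions with the sup distance, the operator `v ↦ 1_{[0,T₀]} F[v]` is a
contraction with constant `‖g‖ Lip(c) T₀ e^{c₀T₀}`: the path actions `∫₀ᵗ c(v(t−s, ω(s))) ds`
are at most `c₀T₀`, where `exp` is `e^{c₀T₀}`-Lipschitz, and for two functions `v, w` they differ
by at most `Lip(c) T₀ sup |v − w|`. Uniform limits of measurable functions are measurable, so
Banach's fixed-point theorem applies, and `|F[v]| ≤ ‖g‖ e^{c₀T₀}` for every `v`. Since `F[v](t, ·)`
only depends on `v` on `[0,t]`, any bounded measurable solution, cut off outside `[0,T₀]`, is a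
fixed point of the same contraction, whence uniqueness.
-/

open Function
open scoped UniformConvergence NNReal ENNReal Topology

theorem measurable_intervalIntegral {α : Type*} [MeasurableSpace α] {f : α → ℝ → ℝ}
    (hf : Measurable (uncurry f)) {a b : α → ℝ} (ha : Measurable a) (hb : Measurable b) :
    Measurable fun x => ∫ s in a x..b x, f x s := by
  have hIoc : ∀ {a b : α → ℝ}, Measurable a → Measurable b →
      Measurable fun x => ∫ s in Ioc (a x) (b x), f x s := fun {a b} ha hb => by
    simp_rw [← integral_indicator measurableSet_Ioc]
    refine (StronglyMeasurable.integral_prod_right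
      (f := fun x => (Ioc (a x) (b x)).indicator (f x)) ?_).measurable
    have hS : MeasurableSet {p : α × ℝ | p.2 ∈ Ioc (a p.1) (b p.1)} :=
      (measurableSet_lt (ha.comp measurable_fst) measurable_snd).inter
        (measurableSet_le measurable_snd (hb.comp measurable_fst))
    exact (Measurable.ite hS hf measurable_const).stronglyMeasurable
  simp only [intervalIntegral]
  exact (hIoc ha hb).sub (hIoc hb ha)

theorem abs_exp_sub_exp_le_of_le {a b M : ℝ} (ha : a ≤ M) (hb : b ≤ M) :
    |Real.exp a - Real.exp b| ≤ Real.exp M * |a - b| := by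
  simpa [Real.norm_eq_abs] using (convex_Iic M).norm_image_sub_le_of_norm_deriv_le
    (fun _ _ => Real.differentiableAt_exp) (fun x hx => by simpa using hx) hb ha

namespace UniformFun

variable {α : Type*}

theorem isClosed_setOf_measurable [MeasurableSpace α] :
    IsClosed {v : α →ᵤ ℝ | Measurable (toFun v)} := by
  refine isClosed_iff_clusterPt.2 fun v hv => ?_
  obtain ⟨w, hws, hwv⟩ := mem_closure_iff_seq_limit.1 (mem_closure_iff_clusterPt.2 hv)
  have hpt : ∀ a, Tendsto (fun n => toFun (w n) a) atTop (𝓝 (toFun v a)) := fun a =>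
    (UniformFun.tendsto_iff_tendstoUniformly.1 hwv).tendsto_at a
  exact measurable_of_tendsto_metrizable hws (tendsto_pi_nhds.2 hpt)

theorem edist_ofFun_lt_top {v w : α → ℝ} {C C' : ℝ} (hv : ∀ a, |v a| ≤ C)
    (hw : ∀ a, |w a| ≤ C') : edist (ofFun v) (ofFun w) < ∞ := by
  refine lt_of_le_of_lt (edist_le.2 fun a => ?_) (ENNReal.ofReal_lt_top (r := C + C'))
  rw [edist_dist, Real.dist_eq]
  exact ENNReal.ofReal_le_ofReal ((abs_sub _ _).trans (add_le_add (hv a) (hw a)))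

theorem abs_sub_le_toReal_edist {v w : α →ᵤ ℝ} (h : edist v w ≠ ∞) (a : α) :
    |toFun v a - toFun w a| ≤ (edist v w).toReal := by
  rw [← Real.dist_eq, dist_edist]
  exact ENNReal.toReal_mono h edist_eval_le

end UniformFun

open UniformFun Metric in
theorem exists_unique_measurable_fixedPoint {α : Type*} [MeasurableSpace α]
    {Φ : (α → ℝ) → α → ℝ} {K : ℝ≥0} (hK : K < 1)
    (hΦm : ∀ v, Measurable v → Measurable (Φ v))
    (hΦb : ∀ v, Measurable v → (∃ C, ∀ a, |v a| ≤ C) → ∃ C, ∀ a, |Φ v a| ≤ C)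
    (hΦ : ∀ v w, Measurable v → Measurable w → (∃ C, ∀ a, |v a| ≤ C) →
      (∃ C, ∀ a, |w a| ≤ C) → ∀ D, (∀ a, |v a - w a| ≤ D) → ∀ a, |Φ v a - Φ w a| ≤ K * D) :
    ∃ u, (Measurable u ∧ Φ u = u) ∧
      ∀ u', Measurable u' → (∃ C, ∀ a, |u' a| ≤ C) → Φ u' = u' → u' = u := by
  -- bounded measurable functions (finite distance to `0`): closed, hence complete
  set s : Set (α →ᵤ ℝ) := {v | Measurable (toFun v)} ∩ eball (ofFun 0) ∞
  have hbdd : ∀ {v}, v ∈ s → ∃ C, ∀ a, |toFun v a| ≤ C := fun {v} hv =>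
    ⟨(edist v (ofFun 0)).toReal, fun a => by
      simpa using abs_sub_le_toReal_edist hv.2.ne a⟩
  have hmem : ∀ {v}, Measurable v → (∃ C, ∀ a, |v a| ≤ C) → ofFun v ∈ s :=
    fun hm ⟨_, hC⟩ => ⟨hm, edist_ofFun_lt_top hC (C' := 0) (by simp)⟩
  have hfin : ∀ {v w}, v ∈ s → w ∈ s → edist v w ≠ ∞ := fun hv hw =>
    (edist_triangle_right _ _ (ofFun 0)).trans_lt (ENNReal.add_lt_top.2 ⟨hv.2, hw.2⟩) |>.ne
  set f : (α →ᵤ ℝ) → (α →ᵤ ℝ) := fun v => ofFun (Φ (toFun v))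
  have hfs : MapsTo f s s := fun v hv => hmem (hΦm _ hv.1) (hΦb _ hv.1 (hbdd hv))
  have hf : ContractingWith K (hfs.restrict f s s) := by
    refine ⟨hK, fun v w => ?_⟩
    have h := hfin v.2 w.2
    refine edist_le.2 fun a => ?_
    rw [edist_dist, Real.dist_eq, Subtype.edist_eq, ← ENNReal.ofReal_toReal h,
      ← ENNReal.ofReal_coe_nnreal, ← ENNReal.ofReal_mul K.coe_nonneg]
    exact ENNReal.ofReal_le_ofReal (hΦ _ _ v.2.1 w.2.1 (hbdd v.2) (hbdd w.2) _
      (abs_sub_le_toReal_edist h) a)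
  have h0 : ofFun 0 ∈ s := hmem measurable_const ⟨0, by simp⟩
  obtain ⟨u, hu, hfix, -⟩ := hf.exists_fixedPoint'
    (isClosed_setOf_measurable.inter isClosed_eball_top).isComplete hfs h0 (hfin h0 (hfs h0))
  refine ⟨toFun u, ⟨hu.1, hfix⟩, fun u' hu'm hu'b hu'fix => ?_⟩
  have hfix' : IsFixedPt (hfs.restrict f s s) ⟨ofFun u', hmem hu'm hu'b⟩ :=
    Subtype.ext (congrArg ofFun hu'fix)
  have hufix : IsFixedPt (hfs.restrict f s s) ⟨u, hu⟩ := Subtype.ext hfix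
  have := (hf.eq_or_edist_eq_top_of_fixedPoints hfix' hufix).resolve_right
    (hfin (hmem hu'm hu'b) hu)
  exact congrArg (fun v : s => toFun v.1) this

namespace FeynmanKac

variable {E : Type*} [TopologicalSpace E] {T : ℝ} (hT : 0 ≤ T)

noncomputable def pathAction (c : ℝ → ℝ) (v : ℝ → E → ℝ) (t : ℝ) (ω : C(Icc (0:ℝ) T, E)) :
    ℝ :=
  ∫ s in (0:ℝ)..t, c (v (t - s) (ω (projIcc 0 T hT s)))

theorem pathAction_le {c : ℝ → ℝ} {c₀ : ℝ} (hc : ∀ u, |c u| ≤ c₀) (v : ℝ → E → ℝ) {t : ℝ}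
    (ht : 0 ≤ t) (ω : C(Icc (0:ℝ) T, E)) : pathAction hT c v t ω ≤ c₀ * t := by
  refine (le_abs_self _).trans ?_
  simpa [pathAction, abs_of_nonneg ht] using
    intervalIntegral.norm_integral_le_of_norm_le_const (a := 0) (b := t)
      fun s _ => (Real.norm_eq_abs _).trans_le (hc _)

theorem abs_exp_pathAction_mul_le {c : ℝ → ℝ} {c₀ : ℝ} (hc : ∀ u, |c u| ≤ c₀) {g : E → ℝ}
    {G : ℝ} (hg : ∀ x, |g x| ≤ G) (v : ℝ → E → ℝ) {t : ℝ} (ht : 0 ≤ t)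
    (ω : C(Icc (0:ℝ) T, E)) :
    |Real.exp (pathAction hT c v t ω) * g (ω (projIcc 0 T hT t))| ≤ G * Real.exp (c₀ * t) := by
  rw [abs_mul, Real.abs_exp, mul_comm G]
  exact mul_le_mul (Real.exp_le_exp.2 (pathAction_le hT hc v ht ω)) (hg _) (abs_nonneg _)
    (Real.exp_pos _).le

variable [MeasurableSpace E]

section

variable [MeasurableSpace C(Icc (0:ℝ) T, E)]

theorem feynmanKac_eq_integral (μ : E → Measure C(Icc (0:ℝ) T, E)) (c : ℝ → ℝ) (g : E → ℝ)
    (v : ℝ → E → ℝ) (t : ℝ) (x : E) :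
    FeynmanKac hT μ c g v t x =
      ∫ ω, Real.exp (pathAction hT c v t ω) * g (ω (projIcc 0 T hT t)) ∂(μ x) :=
  rfl

theorem feynmanKac_congr (μ : E → Measure C(Icc (0:ℝ) T, E)) (c : ℝ → ℝ) (g : E → ℝ)
    {v w : ℝ → E → ℝ} {t : ℝ} (ht : 0 ≤ t) (hvw : ∀ s ∈ Icc 0 t, v s = w s) (x : E) :
    FeynmanKac hT μ c g v t x = FeynmanKac hT μ c g w t x := by
  have hA : ∀ ω, pathAction hT c v t ω = pathAction hT c w t ω := fun ω =>
    intervalIntegral.integral_congr fun s hs => by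
      rw [uIcc_of_le ht] at hs
      simp only [hvw (t - s) ⟨by linarith [hs.2], by linarith [hs.1]⟩]
  simp only [feynmanKac_eq_integral, hA]

theorem abs_feynmanKac_le {μ : E → Measure C(Icc (0:ℝ) T, E)} [∀ x, IsProbabilityMeasure (μ x)]
    {c : ℝ → ℝ} {c₀ : ℝ} (hc : ∀ u, |c u| ≤ c₀) {g : E → ℝ} {G : ℝ} (hg : ∀ x, |g x| ≤ G)
    (v : ℝ → E → ℝ) {t : ℝ} (ht : 0 ≤ t) (x : E) :
    |FeynmanKac hT μ c g v t x| ≤ G * Real.exp (c₀ * t) := by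
  rw [feynmanKac_eq_integral, ← Real.norm_eq_abs]
  simpa using norm_integral_le_of_norm_le_const (μ := μ x)
    (ae_of_all _ fun ω => (Real.norm_eq_abs _).trans_le (abs_exp_pathAction_mul_le hT hc hg v ht ω))

noncomputable def truncated (μ : E → Measure C(Icc (0:ℝ) T, E)) (c : ℝ → ℝ) (g : E → ℝ)
    (T₀ : ℝ) (v : ℝ × E → ℝ) : ℝ × E → ℝ :=
  (Icc 0 T₀ ×ˢ univ).indicator (uncurry (FeynmanKac hT μ c g (curry v)))

variable {μ : E → Measure C(Icc (0:ℝ) T, E)} {c : ℝ → ℝ} {g : E → ℝ} {T₀ : ℝ}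

theorem truncated_of_mem (v : ℝ × E → ℝ) {t : ℝ} (ht : t ∈ Icc 0 T₀) (x : E) :
    truncated hT μ c g T₀ v (t, x) = FeynmanKac hT μ c g (curry v) t x :=
  indicator_of_mem (mk_mem_prod ht (mem_univ x)) _

theorem truncated_of_notMem (v : ℝ × E → ℝ) {t : ℝ} (ht : t ∉ Icc 0 T₀) (x : E) :
    truncated hT μ c g T₀ v (t, x) = 0 :=
  indicator_of_notMem (fun h => ht h.1) _

theorem abs_truncated_le [∀ x, IsProbabilityMeasure (μ x)] {c₀ : ℝ} (hc : ∀ u, |c u| ≤ c₀)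
    {G : ℝ} (hg : ∀ x, |g x| ≤ G) (v : ℝ × E → ℝ) (a : ℝ × E) :
    |truncated hT μ c g T₀ v a| ≤ G * Real.exp (c₀ * T₀) := by
  obtain ⟨t, x⟩ := a
  have hG : 0 ≤ G := (abs_nonneg _).trans (hg x)
  have hc₀ : 0 ≤ c₀ := (abs_nonneg _).trans (hc 0)
  by_cases ht : t ∈ Icc 0 T₀
  · rw [truncated_of_mem hT v ht]
    have htT₀ := ht.2
    refine (abs_feynmanKac_le hT hc hg _ ht.1 x).trans ?_
    gcongr
  · rw [truncated_of_notMem hT v ht, abs_zero]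
    positivity

theorem truncated_indicator_eq_self {u : ℝ → E → ℝ}
    (hu : ∀ t ∈ Icc 0 T₀, ∀ x, u t x = FeynmanKac hT μ c g u t x) :
    truncated hT μ c g T₀ ((Icc 0 T₀ ×ˢ univ).indicator (uncurry u))
      = (Icc 0 T₀ ×ˢ univ).indicator (uncurry u) := by
  ext ⟨t, x⟩
  by_cases ht : t ∈ Icc 0 T₀
  · rw [truncated_of_mem hT _ ht, indicator_of_mem (mk_mem_prod ht (mem_univ x)),
      uncurry_apply_pair, hu t ht x]
    refine feynmanKac_congr hT μ c g ht.1 (fun s hs => funext fun y => ?_) x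
    rw [curry_apply, indicator_of_mem (mk_mem_prod (Icc_subset_Icc_right ht.2 hs) (mem_univ y)),
      uncurry_apply_pair]
  · rw [truncated_of_notMem hT _ ht, indicator_of_notMem (fun h => ht h.1)]

end

variable [BorelSpace E]

theorem abs_pathAction_sub_le {c : ℝ → ℝ} {Lc : NNReal} (hcL : LipschitzWith Lc c) {c₀ : ℝ}
    (hc : ∀ u, |c u| ≤ c₀) {v w : ℝ → E → ℝ} (hv : Measurable (uncurry v))
    (hw : Measurable (uncurry w)) {t D : ℝ} (ht : 0 ≤ t)
    (hvw : ∀ s ∈ Icc 0 t, ∀ y, |v s y - w s y| ≤ D) (ω : C(Icc (0:ℝ) T, E)) :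
    |pathAction hT c v t ω - pathAction hT c w t ω| ≤ Lc * D * t := by
  have hint : ∀ {v : ℝ → E → ℝ}, Measurable (uncurry v) →
      IntervalIntegrable (fun s => c (v (t - s) (ω (projIcc 0 T hT s)))) volume 0 t :=
    fun hv => (intervalIntegrable_const (c := c₀)).mono_fun'
      (hcL.continuous.measurable.comp (hv.comp ((measurable_const.sub measurable_id).prodMk
        (ω.continuous.comp continuous_projIcc).measurable))).aestronglyMeasurable
      (ae_of_all _ fun s => (Real.norm_eq_abs _).trans_le (hc _))
  rw [pathAction, pathAction, ← intervalIntegral.integral_sub (hint hv) (hint hw)]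
  have hbound : ∀ s ∈ uIoc 0 t, ‖c (v (t - s) (ω (projIcc 0 T hT s)))
      - c (w (t - s) (ω (projIcc 0 T hT s)))‖ ≤ Lc * D := fun s hs => by
    rw [uIoc_of_le ht] at hs
    rw [← dist_eq_norm]
    refine (hcL.dist_le_mul _ _).trans (mul_le_mul_of_nonneg_left ?_ Lc.coe_nonneg)
    exact (Real.dist_eq _ _).trans_le
      (hvw _ ⟨by linarith [hs.2], by linarith [hs.1]⟩ _)
  simpa [abs_of_nonneg ht] using intervalIntegral.norm_integral_le_of_norm_le_const hbound

variable [MeasurableSpace C(Icc (0:ℝ) T, E)] [OpensMeasurableSpace C(Icc (0:ℝ) T, E)]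

theorem measurable_eval_projIcc :
    Measurable fun p : C(Icc (0:ℝ) T, E) × ℝ => p.1 (projIcc 0 T hT p.2) :=
  (continuous_eval.comp (continuous_fst.prodMk (continuous_projIcc.comp continuous_snd) :
    Continuous fun p : C(Icc (0:ℝ) T, E) × ℝ => (p.1, projIcc 0 T hT p.2))).measurable

theorem measurable_pathAction {c : ℝ → ℝ} (hc : Measurable c) {v : ℝ → E → ℝ}
    (hv : Measurable (uncurry v)) :
    Measurable fun p : ℝ × C(Icc (0:ℝ) T, E) => pathAction hT c v p.1 p.2 := by
  have harg : Measurable fun q : (ℝ × C(Icc (0:ℝ) T, E)) × ℝ =>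
      (q.1.1 - q.2, q.1.2 (projIcc 0 T hT q.2)) :=
    ((measurable_fst.comp measurable_fst).sub measurable_snd).prodMk
      ((measurable_eval_projIcc hT).comp
        ((measurable_snd.comp measurable_fst).prodMk measurable_snd))
  exact measurable_intervalIntegral
    (f := fun (p : ℝ × C(Icc (0:ℝ) T, E)) s => c (v (p.1 - s) (p.2 (projIcc 0 T hT s))))
    (hc.comp (hv.comp harg)) measurable_const measurable_fst

theorem measurable_exp_pathAction_mul {c : ℝ → ℝ} (hc : Measurable c) {g : E → ℝ}
    (hg : Measurable g) {v : ℝ → E → ℝ} (hv : Measurable (uncurry v)) :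
    Measurable fun p : ℝ × C(Icc (0:ℝ) T, E) =>
      Real.exp (pathAction hT c v p.1 p.2) * g (p.2 (projIcc 0 T hT p.1)) :=
  (Real.measurable_exp.comp (measurable_pathAction hT hc hv)).mul
    (hg.comp ((measurable_eval_projIcc hT).comp measurable_swap))

theorem measurable_feynmanKac {μ : E → Measure C(Icc (0:ℝ) T, E)} (hμ : Measurable μ)
    [∀ x, IsProbabilityMeasure (μ x)] {c : ℝ → ℝ} (hc : Measurable c) {g : E → ℝ}
    (hg : Measurable g) {v : ℝ → E → ℝ} (hv : Measurable (uncurry v)) :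
    Measurable (uncurry (FeynmanKac hT μ c g v)) := by
  let κ : ProbabilityTheory.Kernel (ℝ × E) C(Icc (0:ℝ) T, E) :=
    (⟨μ, hμ⟩ : ProbabilityTheory.Kernel E _).comap Prod.snd measurable_snd
  have : ProbabilityTheory.IsMarkovKernel κ :=
    ⟨fun p => inferInstanceAs (IsProbabilityMeasure (μ p.2))⟩
  exact (StronglyMeasurable.integral_kernel_prod_right (κ := κ)
    (f := fun p ω => Real.exp (pathAction hT c v p.1 ω) * g (ω (projIcc 0 T hT p.1)))
    ((measurable_exp_pathAction_mul hT hc hg hv).comp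
      ((measurable_fst.comp measurable_fst).prodMk measurable_snd)).stronglyMeasurable).measurable

theorem abs_feynmanKac_sub_le {μ : E → Measure C(Icc (0:ℝ) T, E)}
    [∀ x, IsProbabilityMeasure (μ x)] {c : ℝ → ℝ} {Lc : NNReal} (hcL : LipschitzWith Lc c)
    {c₀ : ℝ} (hc : ∀ u, |c u| ≤ c₀) {g : E → ℝ} (hgm : Measurable g) {G : ℝ}
    (hg : ∀ x, |g x| ≤ G) {v w : ℝ → E → ℝ} (hv : Measurable (uncurry v))
    (hw : Measurable (uncurry w)) {t D : ℝ} (ht : 0 ≤ t)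
    (hvw : ∀ s ∈ Icc 0 t, ∀ y, |v s y - w s y| ≤ D) (x : E) :
    |FeynmanKac hT μ c g v t x - FeynmanKac hT μ c g w t x|
      ≤ G * Real.exp (c₀ * t) * (Lc * D * t) := by
  have hint : ∀ {u : ℝ → E → ℝ}, Measurable (uncurry u) → Integrable
      (fun ω => Real.exp (pathAction hT c u t ω) * g (ω (projIcc 0 T hT t))) (μ x) :=
    fun {u} hu => (integrable_const (G * Real.exp (c₀ * t))).mono'
      ((measurable_exp_pathAction_mul hT hcL.continuous.measurable hgm hu).comp
        measurable_prodMk_left).aestronglyMeasurable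
      (ae_of_all _ fun ω => (Real.norm_eq_abs _).trans_le
        (abs_exp_pathAction_mul_le hT hc hg u ht ω))
  rw [feynmanKac_eq_integral, feynmanKac_eq_integral, ← integral_sub (hint hv) (hint hw),
    ← Real.norm_eq_abs]
  refine (norm_integral_le_of_norm_le_const (C := G * Real.exp (c₀ * t) * (Lc * D * t))
    (ae_of_all _ fun ω => ?_)).trans (by simp)
  have hexp := (abs_exp_sub_exp_le_of_le (pathAction_le hT hc v ht ω)
    (pathAction_le hT hc w ht ω)).trans (mul_le_mul_of_nonneg_left
      (abs_pathAction_sub_le hT hcL hc hv hw ht hvw ω) (Real.exp_pos _).le)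
  rw [← sub_mul, Real.norm_eq_abs, abs_mul, mul_comm G, mul_right_comm]
  calc _ ≤ |Real.exp (pathAction hT c v t ω) - Real.exp (pathAction hT c w t ω)| * G :=
        mul_le_mul_of_nonneg_left (hg _) (abs_nonneg _)
    _ ≤ _ := mul_le_mul_of_nonneg_right hexp ((abs_nonneg _).trans (hg x))

theorem measurable_truncated (hμ : Measurable μ) [∀ x, IsProbabilityMeasure (μ x)]
    (hc : Measurable c) (hg : Measurable g) {v : ℝ × E → ℝ} (hv : Measurable v) :
    Measurable (truncated hT μ c g T₀ v) :=
  (measurable_feynmanKac hT hμ hc hg (by rwa [uncurry_curry])).indicator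
    (measurableSet_Icc.prod MeasurableSet.univ)

theorem abs_truncated_sub_le [∀ x, IsProbabilityMeasure (μ x)] {Lc : NNReal}
    (hcL : LipschitzWith Lc c) {c₀ : ℝ} (hc : ∀ u, |c u| ≤ c₀) (hgm : Measurable g) {G : ℝ}
    (hg : ∀ x, |g x| ≤ G) (hT₀ : 0 ≤ T₀) {v w : ℝ × E → ℝ} (hv : Measurable v)
    (hw : Measurable w) {D : ℝ} (hvw : ∀ a, |v a - w a| ≤ D) (a : ℝ × E) :
    |truncated hT μ c g T₀ v a - truncated hT μ c g T₀ w a|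
      ≤ G * Lc * T₀ * Real.exp (c₀ * T₀) * D := by
  obtain ⟨t, x⟩ := a
  have hG : 0 ≤ G := (abs_nonneg _).trans (hg x)
  have hc₀ : 0 ≤ c₀ := (abs_nonneg _).trans (hc 0)
  have hD : 0 ≤ D := (abs_nonneg _).trans (hvw (t, x))
  by_cases ht : t ∈ Icc 0 T₀
  · rw [truncated_of_mem hT v ht, truncated_of_mem hT w ht]
    refine (abs_feynmanKac_sub_le hT hcL hc hgm hg (by exact hv) (by exact hw) ht.1
      (fun s _ y => hvw (s, y)) x).trans ?_
    have hLDt := mul_nonneg (mul_nonneg Lc.coe_nonneg hD) ht.1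
    have htT₀ := ht.2
    calc G * Real.exp (c₀ * t) * (Lc * D * t)
        ≤ G * Real.exp (c₀ * T₀) * (Lc * D * T₀) := by gcongr
      _ = G * Lc * T₀ * Real.exp (c₀ * T₀) * D := by ring
  · rw [truncated_of_notMem hT v ht, truncated_of_notMem hT w ht, sub_zero, abs_zero]
    positivity

end FeynmanKac

theorem feynmanKac_fixed_point_general
    {E : Type*} [MetricSpace E] [MeasurableSpace E] [BorelSpace E]
    {T : ℝ} (hT : 0 < T)
    [MeasurableSpace C(Set.Icc (0:ℝ) T, E)] [BorelSpace C(Set.Icc (0:ℝ) T, E)]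
    (μ : E → Measure C(Set.Icc (0:ℝ) T, E)) (hμmeas : Measurable μ)
    (hμ : ∀ x, IsProbabilityMeasure (μ x))
    (c : ℝ → ℝ) (Lc : NNReal) (hc : LipschitzWith Lc c)
    (c₀ : ℝ) (hc₀ : ∀ u : ℝ, 0 ≤ c u ∧ c u ≤ c₀)
    (g : E → ℝ) (hgm : Measurable g) (G : ℝ) (hG : ∀ x, |g x| ≤ G)
    (T₀ : ℝ) (hT₀ : 0 < T₀)
    (hcontr : G * (Lc : ℝ) * T₀ * Real.exp (c₀ * T₀) < 1) :
    ∃ u : ℝ → E → ℝ,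
      (Measurable (Function.uncurry u) ∧ (∃ C : ℝ, ∀ s y, |u s y| ≤ C) ∧
        (∀ t ∈ Set.Icc (0:ℝ) T₀, ∀ x : E, u t x = FeynmanKac hT.le μ c g u t x) ∧
        (∀ t ∈ Set.Icc (0:ℝ) T₀, ∀ x : E, |u t x| ≤ G * Real.exp (c₀ * T₀))) ∧
      (∀ u' : ℝ → E → ℝ, Measurable (Function.uncurry u') → (∃ C : ℝ, ∀ s y, |u' s y| ≤ C) →
        (∀ t ∈ Set.Icc (0:ℝ) T₀, ∀ x : E, u' t x = FeynmanKac hT.le μ c g u' t x) →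
        ∀ t ∈ Set.Icc (0:ℝ) T₀, ∀ x : E, u' t x = u t x) := by
  have hcb : ∀ u, |c u| ≤ c₀ := fun u => abs_le.2 ⟨by linarith [hc₀ u], (hc₀ u).2⟩
  obtain ⟨u, ⟨hum, hufix⟩, huniq⟩ := exists_unique_measurable_fixedPoint
    (Φ := FeynmanKac.truncated hT.le μ c g T₀) (Real.toNNReal_lt_one.2 hcontr)
    (fun v hv => FeynmanKac.measurable_truncated hT.le hμmeas hc.continuous.measurable hgm hv)
    (fun v _ _ => ⟨_, FeynmanKac.abs_truncated_le hT.le hcb hG v⟩)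
    (fun v w hv hw _ _ D hD a =>
      (FeynmanKac.abs_truncated_sub_le hT.le hc hcb hgm hG hT₀.le hv hw hD a).trans
        (mul_le_mul_of_nonneg_right (Real.le_coe_toNNReal _) ((abs_nonneg _).trans (hD a))))
  have hbound : ∀ s y, |curry u s y| ≤ G * Real.exp (c₀ * T₀) := fun s y =>
    hufix ▸ FeynmanKac.abs_truncated_le hT.le hcb hG u (s, y)
  refine ⟨curry u, ⟨by rwa [uncurry_curry], ⟨_, hbound⟩,
    fun t ht x => (congrFun hufix (t, x)).symm.trans (FeynmanKac.truncated_of_mem hT.le u ht x),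
    fun t _ x => hbound t x⟩, fun u' hu'm ⟨C, hC⟩ hu' t ht x => ?_⟩
  have hS : MeasurableSet (Icc 0 T₀ ×ˢ (univ : Set E)) := measurableSet_Icc.prod .univ
  have := huniq _ (hu'm.indicator hS)
    ⟨C, fun a => (Real.norm_eq_abs _ ▸ norm_indicator_le_norm_self _ a).trans (hC a.1 a.2)⟩
    (FeynmanKac.truncated_indicator_eq_self hT.le hu')
  simpa [indicator_of_mem (mk_mem_prod ht (mem_univ x))] using congrFun this (t, x)

/-- If `‖g‖ · Lip(c) · T₀ · e^{c₀T₀} < 1`, there is a unique bounded measurable solution of the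
integral equation `u = F[u]` on `[0,T₀] × E`, and it satisfies `|u| ≤ ‖g‖ e^{c₀T₀}`. -/
theorem feynmanKac_fixed_point
    {E : Type*} [MetricSpace E] [PolishSpace E] [MeasurableSpace E] [BorelSpace E]
    {T : ℝ} (hT : 0 < T)
    [MeasurableSpace C(Set.Icc (0:ℝ) T, E)] [BorelSpace C(Set.Icc (0:ℝ) T, E)]
    (μ : E → Measure C(Set.Icc (0:ℝ) T, E)) (hμmeas : Measurable μ)
    (hμ : ∀ x, IsProbabilityMeasure (μ x))
    (c : ℝ → ℝ) (Lc : NNReal) (hc : LipschitzWith Lc c)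
    (c₀ : ℝ) (hc₀ : ∀ u : ℝ, 0 ≤ c u ∧ c u ≤ c₀)
    (g : E → ℝ) (hgm : Measurable g) (G : ℝ) (hG : ∀ x, |g x| ≤ G)
    (T₀ : ℝ) (hT₀ : 0 < T₀) (hT₀T : T₀ ≤ T)
    (hcontr : G * (Lc : ℝ) * T₀ * Real.exp (c₀ * T₀) < 1) :
    ∃ u : ℝ → E → ℝ,
      (Measurable (Function.uncurry u) ∧ (∃ C : ℝ, ∀ s y, |u s y| ≤ C) ∧
        (∀ t ∈ Set.Icc (0:ℝ) T₀, ∀ x : E, u t x = FeynmanKac hT.le μ c g u t x) ∧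
        (∀ t ∈ Set.Icc (0:ℝ) T₀, ∀ x : E, |u t x| ≤ G * Real.exp (c₀ * T₀))) ∧
      (∀ u' : ℝ → E → ℝ, Measurable (Function.uncurry u') → (∃ C : ℝ, ∀ s y, |u' s y| ≤ C) →
        (∀ t ∈ Set.Icc (0:ℝ) T₀, ∀ x : E, u' t x = FeynmanKac hT.le μ c g u' t x) →
        ∀ t ∈ Set.Icc (0:ℝ) T₀, ∀ x : E, u' t x = u t x) :=
  feynmanKac_fixed_point_general hT μ hμmeas hμ c Lc hc c₀ hc₀ g hgm G hG T₀ hT₀ hcontr
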